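/- arXiv:2307.00851 — 3 statements merged into one kernel-verified Lean document; each statement's English description precedes it below -/
import Mathlib

section
/- Let X be a zero-dimensional metrizable separable space of cardinality at least two, f : X → X a homeomorphism, and x ∈ X a point whose orbit {fⁱ(x) : i ∈ ℤ} is dense in X. Then the following are equivalent: (1) (X,G_f) has no continuous 2-coloring; (2) the closure of {f^{2n}(x) : n ∈ ℤ} meets the closure of {f^{2p+1}(x) : p ∈ ℤ}; (3) there is y ∈ X with (y,y) in the closure in X×X of ⋃_{p∈ℕ} G_f^{2p+1}; (4) there is y ∈ X with (y,y) in the closure in X×X of ⋃_{p∈ℕ} (\overline{G_f})^{2p+1}, where \overline{G_f} is the closure of G_f in X×X. -/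
open TopologicalSpace

/-- A *graph* on `X`: a symmetric irreflexive binary relation on `X`. -/
def IsGraph {X : Type*} (G : Set (X × X)) : Prop :=
  (∀ x y : X, (x, y) ∈ G → (y, x) ∈ G) ∧ ∀ x : X, (x, x) ∉ G

/-- `(X, G)` admits a continuous coloring with `n` colors
(`Fin n` carries the discrete topology). -/
def HasContColoring {X : Type*} [TopologicalSpace X] (G : Set (X × X)) (n : ℕ) : Prop :=
  ∃ c : X → Fin n, Continuous c ∧ ∀ x y : X, (x, y) ∈ G → c x ≠ c y

/-- `(X, G)` admits a countable continuous coloring (`ℕ` is discrete). -/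
def HasCtbleContColoring {X : Type*} [TopologicalSpace X] (G : Set (X × X)) : Prop :=
  ∃ c : X → ℕ, Continuous c ∧ ∀ x y : X, (x, y) ∈ G → c x ≠ c y

/-- `(X,G) ≼_c (Y,H)` : there is a continuous homomorphism. -/
def RedC {X Y : Type*} [TopologicalSpace X] [TopologicalSpace Y]
    (G : Set (X × X)) (H : Set (Y × Y)) : Prop :=
  ∃ φ : X → Y, Continuous φ ∧ ∀ x y : X, (x, y) ∈ G → (φ x, φ y) ∈ H

/-- `(X,G) ≼^i_c (Y,H)` : there is an injective continuous homomorphism. -/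
def RedIC {X Y : Type*} [TopologicalSpace X] [TopologicalSpace Y]
    (G : Set (X × X)) (H : Set (Y × Y)) : Prop :=
  ∃ φ : X → Y, Continuous φ ∧ Function.Injective φ ∧
    ∀ x y : X, (x, y) ∈ G → (φ x, φ y) ∈ H

/-- A space is zero-dimensional if the clopen sets form a basis. -/
def ZeroDim (X : Type*) [TopologicalSpace X] : Prop :=
  IsTopologicalBasis {s : Set X | IsClopen s}

/-- zero-dimensional metrizable compact -/
def Is0DMC (X : Type*) [TopologicalSpace X] : Prop :=
  CompactSpace X ∧ MetrizableSpace X ∧ ZeroDim X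

/-- zero-dimensional metrizable separable -/
def Is0DMS (X : Type*) [TopologicalSpace X] : Prop :=
  MetrizableSpace X ∧ SeparableSpace X ∧ ZeroDim X

/-- The graph induced by a (total) function `f : X → X`. -/
def FnGraph {X : Type*} (f : X → X) : Set (X × X) :=
  {p | p.1 ≠ p.2 ∧ (p.2 = f p.1 ∨ p.1 = f p.2)}

/-- `R^l` : the `l`-fold relational composition of `R`. -/
def RelPow {X : Type*} (R : Set (X × X)) (l : ℕ) : Set (X × X) :=
  {p | ∃ f : ℕ → X, f 0 = p.1 ∧ f l = p.2 ∧ ∀ i < l, (f i, f (i + 1)) ∈ R}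

/-!
Colour the orbit of `x` by the parity of the exponent. A continuous 2-colouring of `G_f` must
alternate along the orbit, so by density it is determined by the clopen set of points of one colour,
which then has to be the closure of the even half of the orbit with complement the closure of the
odd half; conversely, when these two closures are disjoint they are complementary clopen sets
swapped by `f`. On the other hand the colour flips along every edge and `{(u, v) | c u ≠ c v}` is
closed, so it contains the closure of all odd paths in `closure G_f`, which misses the diagonal;
a common point `y` of the two closures is a limit of pairs (even orbit point, odd orbit point),
each joined by an odd path along the orbit.
-/

open Set Function

section RelPow

variable {X : Type*} {R S : Set (X × X)}

lemma relPow_mono (h : R ⊆ S) (l : ℕ) : RelPow R l ⊆ RelPow S l := by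
  rintro ⟨a, b⟩ ⟨g, h0, hl, hs⟩
  exact ⟨g, h0, hl, fun i hi => h (hs i hi)⟩

lemma exists_mem_relPow_of_mem_relPow_succ {a b : X} {l : ℕ} (h : (a, b) ∈ RelPow R (l + 1)) :
    ∃ m, (a, m) ∈ RelPow R l ∧ (m, b) ∈ R := by
  obtain ⟨g, h0, hl, hs⟩ := h
  exact ⟨g l, ⟨g, h0, rfl, fun i hi => hs i (by omega)⟩,
    (show g (l + 1) = b from hl) ▸ hs l l.lt_succ_self⟩

lemma mem_relPow_natAbs_sub (g : ℤ → X)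
    (hg : ∀ i, (g i, g (i + 1)) ∈ R ∧ (g (i + 1), g i) ∈ R) (i j : ℤ) :
    (g i, g j) ∈ RelPow R (j - i).natAbs := by
  rcases le_total i j with h | h
  · refine ⟨fun k => g (i + k), by simp, by simp [abs_of_nonneg (sub_nonneg.2 h)], fun k _ => ?_⟩
    simpa [add_assoc] using (hg (i + k)).1
  · refine ⟨fun k => g (i - k), by simp, by simp [abs_of_nonpos (sub_nonpos.2 h)], fun k _ => ?_⟩
    simpa [sub_add_eq_sub_sub] using (hg (i - k - 1)).2

lemma apply_eq_iff_even_of_mem_relPow {c : X → Fin 2} (hc : ∀ p ∈ R, c p.1 ≠ c p.2) :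
    ∀ {l : ℕ} {a b : X}, (a, b) ∈ RelPow R l → (c b = c a ↔ Even l)
  | 0, a, b, ⟨_, h0, hl, _⟩ => by simp [show a = b from h0.symm.trans hl]
  | l + 1, a, b, h => by
    obtain ⟨m, ham, hmb⟩ := exists_mem_relPow_of_mem_relPow_succ h
    rw [Nat.even_add_one, ← apply_eq_iff_even_of_mem_relPow hc ham]
    have hne := hc _ hmb
    generalize c a = u, c b = v, c m = w at hne ⊢
    revert u v w; decide

end RelPow

lemma isClosed_setOf_apply_ne {X Y : Type*} [TopologicalSpace X] [TopologicalSpace Y]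
    [DiscreteTopology Y] {c : X → Y} (hc : Continuous c) :
    IsClosed {p : X × X | c p.1 ≠ c p.2} :=
  (isClosed_discrete {q : Y × Y | q.1 ≠ q.2}).preimage (hc.prodMap hc)

lemma HasContColoring.pair_notMem_closure_iUnion_relPow_odd {X : Type*} [TopologicalSpace X]
    {G : Set (X × X)} (hG : HasContColoring G 2) (y : X) :
    (y, y) ∉ closure (⋃ p : ℕ, RelPow (closure G) (2 * p + 1)) := by
  obtain ⟨c, hc, hcol⟩ := hG
  have hD := isClosed_setOf_apply_ne hc
  have hGD : closure G ⊆ {p | c p.1 ≠ c p.2} := closure_minimal (fun p hp => hcol p.1 p.2 hp) hD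
  have hodd : ⋃ p : ℕ, RelPow (closure G) (2 * p + 1) ⊆ {p | c p.1 ≠ c p.2} := by
    refine iUnion_subset fun p ⟨a, b⟩ hab heq => ?_
    have := apply_eq_iff_even_of_mem_relPow hGD hab
    simp_all
  exact fun hy => closure_minimal hodd hD hy rfl

lemma fnGraph_swap {X : Type*} {f : X → X} {a b : X} (h : (a, b) ∈ FnGraph f) :
    (b, a) ∈ FnGraph f :=
  ⟨h.1.symm, h.2.symm⟩

lemma hasContColoring_two_of_mapsTo_compl {X : Type*} [TopologicalSpace X] {f : X → X}
    {S : Set X} (hS : IsClopen S) (hfS : MapsTo f S Sᶜ) (hfSc : MapsTo f Sᶜ S) :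
    HasContColoring (FnGraph f) 2 := by
  classical
  have hflip : ∀ y, f y ∈ S ↔ y ∉ S := fun y => ⟨fun h hy => hfS hy h, fun hy => hfSc hy⟩
  refine ⟨fun y => if y ∈ S then 0 else 1, ?_, ?_⟩
  · exact Continuous.if (by simp [hS.frontier_eq]) continuous_const continuous_const
  · rintro y z ⟨-, h | h⟩ <;> dsimp only at h <;> subst h
    · by_cases hy : y ∈ S <;> simp [hy, hflip]
    · by_cases hz : z ∈ S <;> simp [hz, hflip]

section Orbit

variable {X : Type*} (σ : Equiv.Perm X) (x : X)

def evenOrbit : Set X := range fun n : ℤ => (σ ^ (2 * n)) x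

def oddOrbit : Set X := range fun p : ℤ => (σ ^ (2 * p + 1)) x

lemma zpow_add_one_apply_eq (i : ℤ) : (σ ^ (i + 1)) x = σ ((σ ^ i) x) := by
  rw [add_comm, zpow_add, zpow_one, Equiv.Perm.mul_apply]

lemma mapsTo_evenOrbit : MapsTo σ (evenOrbit σ x) (oddOrbit σ x) := by
  rintro _ ⟨n, rfl⟩
  exact ⟨n, zpow_add_one_apply_eq σ x _⟩

lemma mapsTo_oddOrbit : MapsTo σ (oddOrbit σ x) (evenOrbit σ x) := by
  rintro _ ⟨p, rfl⟩
  exact ⟨p + 1, by rw [← zpow_add_one_apply_eq]; ring_nf⟩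

lemma evenOrbit_union_oddOrbit :
    evenOrbit σ x ∪ oddOrbit σ x = range fun i : ℤ => (σ ^ i) x := by
  refine (union_subset ?_ ?_).antisymm ?_
  · rintro _ ⟨n, rfl⟩
    exact ⟨_, rfl⟩
  · rintro _ ⟨p, rfl⟩
    exact ⟨_, rfl⟩
  rintro _ ⟨i, rfl⟩
  obtain ⟨n, rfl | rfl⟩ := Int.even_or_odd' i
  exacts [Or.inl ⟨n, rfl⟩, Or.inr ⟨n, rfl⟩]

lemma apply_ne_self_of_dense_orbit [TopologicalSpace X] [T1Space X] [Nontrivial X]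
    (hx : Dense (range fun i : ℤ => (σ ^ i) x)) : σ x ≠ x := by
  intro h
  have hsub : (range fun i : ℤ => (σ ^ i) x) ⊆ {x} := by
    rintro _ ⟨i, rfl⟩
    exact IsFixedPt.perm_zpow h i
  exact singleton_ne_univ x (by simpa using (hx.mono hsub).closure_eq)

lemma zpow_apply_mem_fnGraph (hσ : σ x ≠ x) (i : ℤ) :
    ((σ ^ i) x, (σ ^ (i + 1)) x) ∈ FnGraph σ := by
  refine ⟨?_, Or.inl (zpow_add_one_apply_eq σ x i)⟩
  rw [zpow_add_one, Equiv.Perm.mul_apply]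
  exact (σ ^ i).injective.ne hσ.symm

lemma evenOrbit_prod_oddOrbit_subset (hσ : σ x ≠ x) :
    evenOrbit σ x ×ˢ oddOrbit σ x ⊆ ⋃ p : ℕ, RelPow (FnGraph σ) (2 * p + 1) := by
  rintro ⟨_, _⟩ ⟨⟨n, rfl⟩, ⟨p, rfl⟩⟩
  obtain ⟨q, hq⟩ : Odd (2 * p + 1 - 2 * n).natAbs := Int.natAbs_odd.2 ⟨p - n, by ring⟩
  refine mem_iUnion.2 ⟨q, hq ▸ mem_relPow_natAbs_sub (fun i => (σ ^ i) x) (fun i => ?_) _ _⟩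
  exact ⟨zpow_apply_mem_fnGraph σ x hσ i, fnGraph_swap (zpow_apply_mem_fnGraph σ x hσ i)⟩

lemma hasContColoring_two_of_disjoint_closure [TopologicalSpace X] (hσ : Continuous σ)
    (hx : Dense (range fun i : ℤ => (σ ^ i) x))
    (hdisj : Disjoint (closure (evenOrbit σ x)) (closure (oddOrbit σ x))) :
    HasContColoring (FnGraph σ) 2 := by
  have hcompl : IsCompl (closure (evenOrbit σ x)) (closure (oddOrbit σ x)) := by
    refine ⟨hdisj, codisjoint_iff.2 ?_⟩
    change _ ∪ _ = univ
    rw [← closure_union, evenOrbit_union_oddOrbit, hx.closure_eq]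
  refine hasContColoring_two_of_mapsTo_compl
    ⟨isClosed_closure, hcompl.symm.compl_eq ▸ isClosed_closure.isOpen_compl⟩ ?_ ?_
  · rw [hcompl.compl_eq]
    exact (mapsTo_evenOrbit σ x).closure hσ
  · rw [hcompl.compl_eq]
    exact (mapsTo_oddOrbit σ x).closure hσ

end Orbit

theorem stmt17 (X : Type*) [TopologicalSpace X] [Nontrivial X] (h0 : Is0DMS X)
    (f : X ≃ₜ X) (x : X)
    (hx : Dense (Set.range fun i : ℤ => (f.toEquiv ^ i) x)) :
    List.TFAE
      [¬ HasContColoring (FnGraph ⇑f) 2,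
       (closure (Set.range fun n : ℤ => (f.toEquiv ^ (2 * n)) x) ∩
          closure (Set.range fun p : ℤ => (f.toEquiv ^ (2 * p + 1)) x)).Nonempty,
       ∃ y : X, (y, y) ∈ closure (⋃ p : ℕ, RelPow (FnGraph ⇑f) (2 * p + 1)),
       ∃ y : X, (y, y) ∈ closure (⋃ p : ℕ, RelPow (closure (FnGraph ⇑f)) (2 * p + 1))] := by
  have : MetrizableSpace X := h0.1
  have hfx : f.toEquiv x ≠ x := apply_ne_self_of_dense_orbit f.toEquiv x hx
  tfae_have 1 → 2 := by
    rw [← not_disjoint_iff_nonempty_inter]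
    exact mt (hasContColoring_two_of_disjoint_closure f.toEquiv x f.continuous hx)
  tfae_have 2 → 3 := by
    rintro ⟨y, hy⟩
    refine ⟨y, closure_mono (evenOrbit_prod_oddOrbit_subset f.toEquiv x hfx) ?_⟩
    rwa [closure_prod_eq]
  tfae_have 3 → 4 := fun ⟨y, hy⟩ =>
    ⟨y, closure_mono (iUnion_mono fun _ => relPow_mono subset_closure _) hy⟩
  tfae_have 4 → 1 := fun ⟨y, hy⟩ hcol => hcol.pair_notMem_closure_iUnion_relPow_odd y hy
  tfae_finish
end

section
/- Let X and Y be zero-dimensional metrizable compact spaces, each of cardinality at least three, and let f : X → X and g : Y → Y be minimal homeomorphisms. Then f and g are flip-conjugate if and only if (X,G_f) ≼^i_c (Y,G_g); moreover, any map witnessing one of these two conditions witnesses the other, and consequently (X,G_f) ≼^i_c (Y,G_g) implies (Y,G_g) ≼^i_c (X,G_f). -/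
open TopologicalSpace

/-- A homeomorphism of a compact space is minimal if all of its ℤ-orbits are dense. -/
def IsMinimalHomeo {X : Type*} [TopologicalSpace X] (f : X ≃ₜ X) : Prop :=
  ∀ x : X, Dense (Set.range fun i : ℤ => (f.toEquiv ^ i) x)

/-!
Send an edge `(x, f x)` of `G_f` through an injective continuous homomorphism `φ`; it becomes an
edge of `G_g`, so `φ (f x)` is `g (φ x)` or `g⁻¹ (φ x)`. Since `f` has no points of period two
(such an orbit would be closed and dense, but `X` has three points), injectivity of `φ` forces
`x` and `f x` to make the same choice. The set of points making the first choice is therefore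
closed and `f`-invariant, so by minimality it is empty or everything: `φ` semiconjugates `f` to
`g` or to `g⁻¹`. The range of `φ` is then a nonempty closed `g`-invariant set, hence all of `Y`,
and a continuous bijection from a compact space to a Hausdorff space is a homeomorphism.
-/

open Function Set

theorem pair_ne_univ_of_three_distinct {X : Type*} (h3 : ∃ a b c : X, a ≠ b ∧ a ≠ c ∧ b ≠ c)
    (x y : X) : ({x, y} : Set X) ≠ univ := by
  intro h
  have hmem (z : X) : z = x ∨ z = y := eq_univ_iff_forall.mp h z
  obtain ⟨a, b, c, hab, hac, hbc⟩ := h3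
  rcases hmem a with rfl | rfl <;> rcases hmem b with rfl | rfl <;> rcases hmem c with rfl | rfl <;>
    simp_all

theorem Function.Semiconj.image_range {α β : Type*} {φ : α → β} {f : α → α} {g : β → β}
    (h : Semiconj φ f g) (hf : Surjective f) : g '' range φ = range φ := by
  rw [← range_comp, ← h.comp_eq, hf.range_comp]

namespace IsMinimalHomeo

variable {X : Type*} [TopologicalSpace X] {f : X ≃ₜ X}

open Pointwise in
theorem eq_univ_of_isClosed (hf : IsMinimalHomeo f) {S : Set X} (hS : IsClosed S)
    (hne : S.Nonempty) (hinv : f '' S = S) : S = univ := by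
  obtain ⟨a, ha⟩ := hne
  have hstab : f.toEquiv ∈ MulAction.stabilizer (Equiv.Perm X) S := hinv
  have horbit : range (fun i : ℤ => (f.toEquiv ^ i) a) ⊆ S := by
    rintro _ ⟨i, rfl⟩
    rw [← MulAction.mem_stabilizer_iff.mp (zpow_mem hstab i)]
    exact smul_mem_smul_set ha
  exact hS.closure_eq.symm.trans ((hf a).mono horbit).closure_eq

theorem apply_apply_ne [T1Space X] (hf : IsMinimalHomeo f)
    (h3 : ∃ a b c : X, a ≠ b ∧ a ≠ c ∧ b ≠ c) (x : X) : f (f x) ≠ x := by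
  intro hx
  refine pair_ne_univ_of_three_distinct h3 x (f x) <|
    hf.eq_univ_of_isClosed (toFinite _).isClosed (insert_nonempty _ _) ?_
  rw [image_pair, hx, pair_comm]

end IsMinimalHomeo

section FlipSemiconj

variable {X Y : Type*} [TopologicalSpace X] [TopologicalSpace Y] {f : X ≃ₜ X} {g : Y ≃ₜ Y}
  {φ : X → Y}

def FlipSemiconj (φ : X → Y) (f : X ≃ₜ X) (g : Y ≃ₜ Y) : Prop :=
  Semiconj φ f g ∨ Semiconj φ f g.symm

theorem FlipSemiconj.mapsTo_fnGraph (hφ : Injective φ) (h : FlipSemiconj φ f g) :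
    ∀ x y, (x, y) ∈ FnGraph f → (φ x, φ y) ∈ FnGraph g := by
  rintro x y ⟨hne, hxy⟩
  dsimp only at hne hxy
  refine ⟨hφ.ne hne, ?_⟩
  rcases hxy with rfl | rfl
  · rcases h with h | h
    · exact .inl (h x)
    · exact .inr (by rw [h x, g.apply_symm_apply])
  · rcases h with h | h
    · exact .inr (h y)
    · exact .inl (by rw [h y, g.apply_symm_apply])

theorem FlipSemiconj.symm {e : X ≃ₜ Y} (h : FlipSemiconj e f g) : FlipSemiconj e.symm g f := by
  rcases h with h | h
  · exact .inl (h.inverse_left e.symm_apply_apply e.apply_symm_apply)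
  · exact .inr ((h.inverse_left e.symm_apply_apply e.apply_symm_apply).inverses_right
      g.symm_apply_apply f.symm_apply_apply)

theorem FlipSemiconj.surjective [CompactSpace X] [T2Space Y] [Nonempty X]
    (hg : IsMinimalHomeo g) (hφ : Continuous φ) (h : FlipSemiconj φ f g) : Surjective φ := by
  have hinv : g '' range φ = range φ := by
    rcases h with h | h
    · exact h.image_range f.surjective
    · exact (h.inverses_right f.apply_symm_apply g.apply_symm_apply).image_range f.symm.surjective
  exact range_eq_univ.mp <|
    hg.eq_univ_of_isClosed (isCompact_range hφ).isClosed (range_nonempty φ) hinv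

theorem apply_eq_or_apply_eq_symm_of_mapsTo_fnGraph (hf : ∀ x, f x ≠ x)
    (hφ : ∀ x y, (x, y) ∈ FnGraph f → (φ x, φ y) ∈ FnGraph g) (x : X) :
    φ (f x) = g (φ x) ∨ φ (f x) = g.symm (φ x) :=
  (hφ x (f x) ⟨(hf x).symm, .inl rfl⟩).2.imp id fun h => g.eq_symm_apply.mpr h.symm

theorem flipSemiconj_of_mapsTo_fnGraph [T2Space Y] (hf : IsMinimalHomeo f)
    (hf2 : ∀ x, f (f x) ≠ x) (hφc : Continuous φ) (hφi : Injective φ)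
    (hφ : ∀ x y, (x, y) ∈ FnGraph f → (φ x, φ y) ∈ FnGraph g) : FlipSemiconj φ f g := by
  have hstep := apply_eq_or_apply_eq_symm_of_mapsTo_fnGraph
    (fun x hx => hf2 x (by rw [hx, hx])) hφ
  set A := {x | φ (f x) = g (φ x)}
  have hA : IsClosed A := isClosed_eq (hφc.comp f.continuous) (g.continuous.comp hφc)
  -- `x` and `f x` step the same way, else `φ (f (f x)) = φ x`
  have hpre : f ⁻¹' A = A := by
    ext x
    constructor
    · intro h2
      refine (hstep x).resolve_right fun h1 => hf2 x (hφi ?_)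
      rw [show φ (f (f x)) = g (φ (f x)) from h2, h1, g.apply_symm_apply]
    · intro h1
      refine (hstep (f x)).resolve_right fun h2 => hf2 x (hφi ?_)
      rw [h2, show φ (f x) = g (φ x) from h1, g.symm_apply_apply]
  rcases A.eq_empty_or_nonempty with hA0 | hAne
  · exact .inr fun x => (hstep x).resolve_left fun h => hA0.subset h
  · have hinv : f '' A = A := by simpa only [hpre] using f.image_preimage A
    exact .inl fun x => (hf.eq_univ_of_isClosed hA hAne hinv ▸ mem_univ x : x ∈ A)

theorem exists_homeomorph_flipSemiconj_of_mapsTo_fnGraph [CompactSpace X] [T2Space Y]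
    [Nonempty X] (hf : IsMinimalHomeo f) (hf2 : ∀ x, f (f x) ≠ x) (hg : IsMinimalHomeo g)
    (hφc : Continuous φ) (hφi : Injective φ)
    (hφ : ∀ x y, (x, y) ∈ FnGraph f → (φ x, φ y) ∈ FnGraph g) :
    ∃ e : X ≃ₜ Y, ⇑e = φ ∧ FlipSemiconj e f g := by
  have h := flipSemiconj_of_mapsTo_fnGraph hf hf2 hφc hφi hφ
  exact ⟨(show Continuous (Equiv.ofBijective φ ⟨hφi, h.surjective hg hφc⟩) from hφc)
    |>.homeoOfEquivCompactToT2, rfl, h⟩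

end FlipSemiconj

theorem stmt18_general (X Y : Type*) [TopologicalSpace X] [TopologicalSpace Y]
    (hX : Is0DMC X) (hY : Is0DMC Y)
    (hX3 : ∃ a b c : X, a ≠ b ∧ a ≠ c ∧ b ≠ c)
    (f : X ≃ₜ X) (g : Y ≃ₜ Y) (hf : IsMinimalHomeo f) (hg : IsMinimalHomeo g) :
    ((∃ φ : X ≃ₜ Y, (∀ x, φ (f x) = g (φ x)) ∨ ∀ x, φ (f x) = g.symm (φ x)) ↔
        RedIC (FnGraph ⇑f) (FnGraph ⇑g)) ∧
    (∀ φ : X → Y, Continuous φ → Function.Injective φ →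
        (∀ x y : X, (x, y) ∈ FnGraph ⇑f → (φ x, φ y) ∈ FnGraph ⇑g) →
        ∃ e : X ≃ₜ Y, ⇑e = φ ∧
          ((∀ x, e (f x) = g (e x)) ∨ ∀ x, e (f x) = g.symm (e x))) ∧
    (∀ e : X ≃ₜ Y, ((∀ x, e (f x) = g (e x)) ∨ ∀ x, e (f x) = g.symm (e x)) →
        Function.Injective (⇑e) ∧ Continuous (⇑e) ∧
          ∀ x y : X, (x, y) ∈ FnGraph ⇑f → (e x, e y) ∈ FnGraph ⇑g) ∧
    (RedIC (FnGraph ⇑f) (FnGraph ⇑g) → RedIC (FnGraph ⇑g) (FnGraph ⇑f)) := by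
  obtain ⟨_, _, -⟩ := hX
  obtain ⟨-, _, -⟩ := hY
  have : Nonempty X := hX3.nonempty
  have hconj (φ : X → Y) := exists_homeomorph_flipSemiconj_of_mapsTo_fnGraph (φ := φ) hf
    (hf.apply_apply_ne hX3) hg
  have hhom (e : X ≃ₜ Y) (he : FlipSemiconj e f g) :=
    FlipSemiconj.mapsTo_fnGraph e.injective he
  refine ⟨⟨fun ⟨e, he⟩ => ⟨e, e.continuous, e.injective, hhom e he⟩, fun ⟨φ, hc, hi, hφ⟩ => ?_⟩,
    hconj, fun e he => ⟨e.injective, e.continuous, hhom e he⟩, fun ⟨φ, hc, hi, hφ⟩ => ?_⟩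
  · obtain ⟨e, -, he⟩ := hconj φ hc hi hφ
    exact ⟨e, he⟩
  · obtain ⟨e, -, he⟩ := hconj φ hc hi hφ
    exact ⟨e.symm, e.symm.continuous, e.symm.injective, he.symm.mapsTo_fnGraph e.symm.injective⟩

theorem stmt18 (X Y : Type*) [TopologicalSpace X] [TopologicalSpace Y]
    (hX : Is0DMC X) (hY : Is0DMC Y)
    (hX3 : ∃ a b c : X, a ≠ b ∧ a ≠ c ∧ b ≠ c)
    (hY3 : ∃ a b c : Y, a ≠ b ∧ a ≠ c ∧ b ≠ c)
    (f : X ≃ₜ X) (g : Y ≃ₜ Y) (hf : IsMinimalHomeo f) (hg : IsMinimalHomeo g) :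
    ((∃ φ : X ≃ₜ Y, (∀ x, φ (f x) = g (φ x)) ∨ ∀ x, φ (f x) = g.symm (φ x)) ↔
        RedIC (FnGraph ⇑f) (FnGraph ⇑g)) ∧
    (∀ φ : X → Y, Continuous φ → Function.Injective φ →
        (∀ x y : X, (x, y) ∈ FnGraph ⇑f → (φ x, φ y) ∈ FnGraph ⇑g) →
        ∃ e : X ≃ₜ Y, ⇑e = φ ∧
          ((∀ x, e (f x) = g (e x)) ∨ ∀ x, e (f x) = g.symm (e x))) ∧
    (∀ e : X ≃ₜ Y, ((∀ x, e (f x) = g (e x)) ∨ ∀ x, e (f x) = g.symm (e x)) →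
        Function.Injective (⇑e) ∧ Continuous (⇑e) ∧
          ∀ x y : X, (x, y) ∈ FnGraph ⇑f → (e x, e y) ∈ FnGraph ⇑g) ∧
    (RedIC (FnGraph ⇑f) (FnGraph ⇑g) → RedIC (FnGraph ⇑g) (FnGraph ⇑f)) :=
  stmt18_general X Y hX hY hX3 f g hf hg
end

section
/- Let X be a zero-dimensional metrizable compact space and f : X → X a minimal homeomorphism such that (X,G_f) has no continuous 2-coloring. Let K be a zero-dimensional metrizable compact space and G a closed graph on K with (K,G) ≼^i_c (X,G_f). Then exactly one of the following holds: (1) (K,G) admits a continuous 2-coloring; (2) (X,G_f) ≼^i_c (K,G). In particular, (X,G_f) is ≼^i_c-minimal both in the class of closed graphs on zero-dimensional metrizable compact spaces with continuous chromatic number at least three, and in the class 𝔊₂ of graphs induced by a homeomorphism of a zero-dimensional metrizable compact space with continuous chromatic number at least three. -/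
/-!
Push `G` forward along the reduction `φ : K → X` and let `T` be the closed set of points `u`
with `(u, f u)` in the image. If some forward orbit stays in `T`, then `T = X`, because forward
orbits of a minimal homeomorphism of a compact space meet every nonempty open set; so `φ` is onto,
hence a homeomorphism, and `φ⁻¹` reduces `G_f` to `G`. Otherwise every forward orbit leaves `T`,
and by compactness and zero-dimensionality it even leaves some clopen `V ⊇ T`. The parity of the
time a point needs to leave `V` is then continuous and flips along every edge `(u, f u)` with
`u ∈ V`, which gives a continuous 2-coloring of the image, and hence of `G`.
-/

open TopologicalSpace

open Function Set

section Dynamics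

variable {X : Type*} [TopologicalSpace X]

theorem Homeomorph.toEquiv_zpow (f : X ≃ₜ X) (i : ℤ) : (f ^ i).toEquiv = f.toEquiv ^ i :=
  map_zpow (⟨⟨Homeomorph.toEquiv, rfl⟩, fun _ _ => rfl⟩ : (X ≃ₜ X) →* Equiv.Perm X) f i

theorem Homeomorph.coe_pow (f : X ≃ₜ X) (n : ℕ) : ⇑(f ^ n) = (⇑f)^[n] := by
  induction n with
  | zero => rfl
  | succ n ih => rw [pow_succ, iterate_succ, ← ih]; rfl

theorem IsMinimalHomeo.exists_iterate_mem [CompactSpace X] {f : X ≃ₜ X} (hmin : IsMinimalHomeo f)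
    (x : X) {U : Set X} (hU : IsOpen U) (hne : U.Nonempty) : ∃ n : ℕ, f^[n] x ∈ U := by
  have hcover : univ ⊆ ⋃ i : ℤ, ⇑(f ^ i) ⁻¹' U := fun y _ => by
    obtain ⟨_, ⟨i, rfl⟩, hi⟩ := (hmin y).exists_mem_open hU hne
    rw [mem_iUnion]
    exact ⟨i, by rwa [mem_preimage, ← Homeomorph.coe_toEquiv, Homeomorph.toEquiv_zpow]⟩
  obtain ⟨s, hs⟩ := isCompact_univ.elim_finite_subcover _
    (fun i => hU.preimage (f ^ i).continuous) hcover
  obtain ⟨m, hm⟩ := s.bddBelow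
  -- Start far enough in the past that every time in `s` becomes a nonnegative time.
  obtain ⟨i, his, hi⟩ := mem_iUnion₂.1 (hs (mem_univ ((f ^ (-m)) x)))
  refine ⟨(i - m).toNat, ?_⟩
  rwa [mem_preimage, ← Homeomorph.mul_apply, ← zpow_add, ← sub_eq_add_neg,
    ← Int.toNat_of_nonneg (sub_nonneg.2 (hm his)), zpow_natCast, Homeomorph.coe_pow] at hi

theorem IsMinimalHomeo.apply_ne_self [T1Space X] {f : X ≃ₜ X} (hmin : IsMinimalHomeo f)
    (hchi : ¬ HasContColoring (FnGraph ⇑f) 2) (x : X) : f x ≠ x := by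
  intro hx
  have hdense : Dense ({x} : Set X) := (hmin x).mono <| by
    rintro _ ⟨i, rfl⟩
    exact (show IsFixedPt f.toEquiv x from hx).perm_zpow i
  have hall : ∀ y, y ∈ ({x} : Set X) := eq_univ_iff_forall.1 (by simpa using hdense.closure_eq)
  exact hchi ⟨fun _ => 0, continuous_const,
    fun a b hab => (hab.1 ((hall a).trans (hall b).symm)).elim⟩

theorem ZeroDim.sInter_isClopen_superset {Y : Type*} [TopologicalSpace Y] (hY : ZeroDim Y)
    {T : Set Y} (hT : IsClosed T) : ⋂₀ {V | IsClopen V ∧ T ⊆ V} = T := by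
  refine (subset_sInter fun V hV => hV.2).antisymm' fun y hy => ?_
  by_contra hyT
  obtain ⟨W, hW, hyW, hWT⟩ := hY.exists_subset_of_mem_open hyT hT.isOpen_compl
  exact hy Wᶜ ⟨hW.compl, subset_compl_comm.1 hWT⟩ hyW

theorem exists_isClopen_superset_forall_exists_notMem [CompactSpace X] {Y : Type*}
    [TopologicalSpace Y] (hY : ZeroDim Y) {ι : Type*} {g : ι → X → Y} (hg : ∀ i, Continuous (g i))
    {T : Set Y} (hT : IsClosed T) (hesc : ∀ x, ∃ i, g i x ∉ T) :
    ∃ V, IsClopen V ∧ T ⊆ V ∧ ∀ x, ∃ i, g i x ∉ V := by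
  let F : {V : Set Y // IsClopen V ∧ T ⊆ V} → Set X := fun V => ⋂ i, g i ⁻¹' V
  have hF : ⋂ V, F V = ∅ := by
    refine eq_empty_of_forall_notMem fun x hx => ?_
    obtain ⟨i, hi⟩ := hesc x
    refine hi (hY.sInter_isClopen_superset hT ▸ mem_sInter.2 fun V hV => ?_)
    exact mem_iInter.1 (mem_iInter.1 hx ⟨V, hV⟩) i
  obtain ⟨t, ht⟩ := isCompact_univ.elim_finite_subfamily_closed F
    (fun V => isClosed_iInter fun i => V.2.1.isClosed.preimage (hg i)) (by rw [univ_inter, hF])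
  refine ⟨⋂ V ∈ t, V.1, isClopen_biInter_finset fun V _ => V.2.1,
    subset_iInter₂ fun V _ => V.2.2, fun x => ?_⟩
  by_contra! hx
  refine ht.subset ⟨mem_univ x, mem_iInter₂.2 fun V hV => mem_iInter.2 fun i => ?_⟩
  exact mem_iInter₂.1 (hx i) V hV

theorem exists_continuous_coloring_of_forall_exists_iterate_notMem {f : X → X}
    (hf : Continuous f) {V : Set X} (hV : IsClopen V) (hesc : ∀ x, ∃ n, f^[n] x ∉ V) :
    ∃ c : X → Fin 2, Continuous c ∧ ∀ u ∈ V, c (f u) ≠ c u := by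
  classical
  let exitTime : X → ℕ := fun x => Nat.find (hesc x)
  have hcont : Continuous exitTime := continuous_discrete_rng.2 fun k => by
    have hk : exitTime ⁻¹' {k} = f^[k] ⁻¹' Vᶜ ∩ ⋂ i ∈ Finset.range k, f^[i] ⁻¹' V := by
      ext x
      simp [exitTime, Nat.find_eq_iff]
    rw [hk]
    exact (hV.isClosed.isOpen_compl.preimage (hf.iterate k)).inter
      (isOpen_biInter_finset fun i _ => hV.isOpen.preimage (hf.iterate i))
  have hstep : ∀ u ∈ V, exitTime u = exitTime (f u) + 1 := fun u hu =>
    Nat.find_comp_succ _ _ (not_not.2 hu)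
  refine ⟨fun x => Fin.ofNat 2 (exitTime x),
    (continuous_of_discreteTopology (f := Fin.ofNat 2)).comp hcont, fun u hu => ?_⟩
  simp only [ne_eq, Fin.ext_iff, Fin.val_ofNat, hstep u hu]
  omega

theorem IsMinimalHomeo.eq_univ_or_exists_coloring [CompactSpace X] (hX : ZeroDim X)
    {f : X ≃ₜ X} (hmin : IsMinimalHomeo f) {T : Set X} (hT : IsClosed T) :
    T = univ ∨ ∃ c : X → Fin 2, Continuous c ∧ ∀ u ∈ T, c (f u) ≠ c u := by
  by_cases hstay : ∃ x, ∀ n, f^[n] x ∈ T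
  · obtain ⟨x, hx⟩ := hstay
    refine Or.inl (by_contra fun hne => ?_)
    obtain ⟨n, hn⟩ := hmin.exists_iterate_mem x hT.isOpen_compl (nonempty_compl.2 hne)
    exact hn (hx n)
  · push Not at hstay
    obtain ⟨V, hV, hTV, hesc⟩ := exists_isClopen_superset_forall_exists_notMem hX
      (fun n => f.continuous.iterate n) hT hstay
    obtain ⟨c, hc, hcV⟩ :=
      exists_continuous_coloring_of_forall_exists_iterate_notMem f.continuous hV hesc
    exact Or.inr ⟨c, hc, fun u hu => hcV u (hTV hu)⟩

end Dynamics

theorem isGraph_fnGraph {X : Type*} (f : X → X) : IsGraph (FnGraph f) :=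
  ⟨fun _ _ h => ⟨h.1.symm, h.2.symm⟩, fun _ h => h.1 rfl⟩

section Graphs

variable {X K : Type*} [TopologicalSpace X] [TopologicalSpace K]

theorem isClosed_setOf_snd_eq_or_fst_eq [T2Space X] {f : X → X} (hf : Continuous f) :
    IsClosed {p : X × X | p.2 = f p.1 ∨ p.1 = f p.2} :=
  (isClosed_eq continuous_snd (hf.comp continuous_fst)).union
    (isClosed_eq continuous_fst (hf.comp continuous_snd))

theorem isClosed_fnGraph [T2Space X] {f : X → X} (hf : Continuous f) (hfix : ∀ x, f x ≠ x) :
    IsClosed (FnGraph f) := by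
  convert isClosed_setOf_snd_eq_or_fst_eq hf using 1
  ext ⟨x, y⟩
  simp only [FnGraph, mem_ofPred_eq, and_iff_right_iff_imp]
  rintro (rfl | rfl)
  exacts [(hfix x).symm, hfix y]

theorem HasContColoring.of_redIC {G : Set (K × K)} {H : Set (X × X)} {n : ℕ}
    (hc : HasContColoring H n) (hred : RedIC G H) : HasContColoring G n :=
  let ⟨c, hc, hcol⟩ := hc
  let ⟨φ, hφ, _, hhom⟩ := hred
  ⟨c ∘ φ, hc.comp hφ, fun a b hab => hcol _ _ (hhom a b hab)⟩

theorem redIC_fnGraph_of_forall_mem_image [CompactSpace K] [T2Space X] {f : X → X}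
    {G : Set (K × K)} (hsym : ∀ a b, (a, b) ∈ G → (b, a) ∈ G) {φ : K → X} (hφ : Continuous φ)
    (hinj : Injective φ) (hcov : ∀ u, (u, f u) ∈ Prod.map φ φ '' G) : RedIC (FnGraph f) G := by
  have hsurj : Surjective φ := fun u => by
    obtain ⟨⟨a, b⟩, -, hab⟩ := hcov u
    exact ⟨a, congrArg Prod.fst hab⟩
  let h : K ≃ₜ X := hφ.homeoOfEquivCompactToT2 (f := Equiv.ofBijective φ ⟨hinj, hsurj⟩)
  have hmem : ∀ u v, (u, v) ∈ FnGraph f → (u, v) ∈ Prod.map φ φ '' G := by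
    simp only [FnGraph, mem_ofPred_eq]
    rintro u v ⟨-, rfl | rfl⟩
    · exact hcov u
    · obtain ⟨⟨a, b⟩, hab, hφab⟩ := hcov v
      simp only [Prod.map, Prod.mk.injEq] at hφab
      exact ⟨(b, a), hsym a b hab, Prod.ext hφab.2 hφab.1⟩
  refine ⟨h.symm, h.symm.continuous, h.symm.injective, fun u v huv => ?_⟩
  obtain ⟨⟨a, b⟩, hab, hφab⟩ := hmem u v huv
  obtain ⟨rfl, rfl⟩ := Prod.mk.inj hφab
  exact (h.symm_apply_apply a).symm ▸ (h.symm_apply_apply b).symm ▸ hab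

theorem hasContColoring_of_forall_mem_image {f : X → X} {G : Set (K × K)}
    (hsym : ∀ a b, (a, b) ∈ G → (b, a) ∈ G) {φ : K → X} (hφ : Continuous φ)
    (hhom : ∀ a b, (a, b) ∈ G → (φ a, φ b) ∈ FnGraph f) {c : X → Fin 2} (hc : Continuous c)
    (hcol : ∀ u, (u, f u) ∈ Prod.map φ φ '' G → c (f u) ≠ c u) : HasContColoring G 2 := by
  refine ⟨c ∘ φ, hc.comp hφ, fun a b hab => ?_⟩
  rcases (hhom a b hab).2 with h | h
  · have := hcol (φ a) ⟨(a, b), hab, by rw [← h]; rfl⟩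
    rw [← h] at this
    exact this.symm
  · have := hcol (φ b) ⟨(b, a), hsym a b hab, by rw [← h]; rfl⟩
    rw [← h] at this
    exact this

theorem isClosed_image_fnGraph [CompactSpace K] [T2Space K] [T2Space X] {g : K → K}
    (hg : Continuous g) {f : X → X} (hf : Continuous f) (hfix : ∀ x, f x ≠ x) {φ : K → X}
    (hφ : Continuous φ) (hhom : ∀ a b, (a, b) ∈ FnGraph g → (φ a, φ b) ∈ FnGraph f) :
    IsClosed (Prod.map φ φ '' FnGraph g) := by
  -- `FnGraph g` need not be closed, but its limit points on the diagonal map to the diagonal,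
  -- which `FnGraph f` avoids.
  have himage : Prod.map φ φ '' FnGraph g = Prod.map φ φ '' closure (FnGraph g) ∩ FnGraph f := by
    refine subset_antisymm
      (fun _ ⟨p, hp, hpq⟩ => ⟨⟨p, subset_closure hp, hpq⟩, hpq ▸ hhom _ _ hp⟩) ?_
    rintro _ ⟨⟨⟨a, b⟩, hab, rfl⟩, hφab⟩
    have hrel := closure_minimal (fun _ hp => hp.2) (isClosed_setOf_snd_eq_or_fst_eq hg) hab
    exact ⟨(a, b), ⟨fun h => hφab.1 (congrArg φ h), hrel⟩, rfl⟩
  rw [himage]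
  exact (isClosed_closure.isCompact.image (hφ.prodMap hφ)).isClosed.inter
    (isClosed_fnGraph hf hfix)

end Graphs

section Dichotomy

variable {X K : Type*} [TopologicalSpace X] [TopologicalSpace K] [CompactSpace X] [T2Space X]
  {f : X ≃ₜ X} [CompactSpace K] {G : Set (K × K)}

theorem IsMinimalHomeo.hasContColoring_or_redIC (hX : ZeroDim X) (hmin : IsMinimalHomeo f)
    (hsym : ∀ a b, (a, b) ∈ G → (b, a) ∈ G) {φ : K → X} (hφ : Continuous φ) (hinj : Injective φ)
    (hhom : ∀ a b, (a, b) ∈ G → (φ a, φ b) ∈ FnGraph ⇑f) (hcl : IsClosed (Prod.map φ φ '' G)) :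
    HasContColoring G 2 ∨ RedIC (FnGraph ⇑f) G := by
  rcases hmin.eq_univ_or_exists_coloring hX (hcl.preimage (continuous_id.prodMk f.continuous))
    with hT | ⟨c, hc, hcol⟩
  · exact Or.inr (redIC_fnGraph_of_forall_mem_image hsym hφ hinj (eq_univ_iff_forall.1 hT))
  · exact Or.inl (hasContColoring_of_forall_mem_image hsym hφ hhom hc hcol)

theorem IsMinimalHomeo.hasContColoring_or_redIC_of_isClosed (hX : ZeroDim X)
    (hmin : IsMinimalHomeo f) (hG : IsGraph G) (hGclosed : IsClosed G)
    (hred : RedIC G (FnGraph ⇑f)) : HasContColoring G 2 ∨ RedIC (FnGraph ⇑f) G :=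
  let ⟨_, hφ, hinj, hhom⟩ := hred
  hmin.hasContColoring_or_redIC hX hG.1 hφ hinj hhom
    (hGclosed.isCompact.image (hφ.prodMap hφ)).isClosed

theorem IsMinimalHomeo.hasContColoring_or_redIC_fnGraph [T2Space K] (hX : ZeroDim X)
    (hmin : IsMinimalHomeo f) (hfix : ∀ x, f x ≠ x) (g : K ≃ₜ K)
    (hred : RedIC (FnGraph ⇑g) (FnGraph ⇑f)) :
    HasContColoring (FnGraph ⇑g) 2 ∨ RedIC (FnGraph ⇑f) (FnGraph ⇑g) :=
  let ⟨_, hφ, hinj, hhom⟩ := hred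
  hmin.hasContColoring_or_redIC hX (isGraph_fnGraph g).1 hφ hinj hhom
    (isClosed_image_fnGraph g.continuous f.continuous hfix hφ hhom)

end Dichotomy

theorem stmt19 (X : Type*) [TopologicalSpace X] (hX : Is0DMC X)
    (f : X ≃ₜ X) (hmin : IsMinimalHomeo f)
    (hchi : ¬ HasContColoring (FnGraph ⇑f) 2)
    (K : Type*) [TopologicalSpace K] (hK : Is0DMC K)
    (G : Set (K × K)) (hG : IsGraph G) (hGclosed : IsClosed G)
    (hred : RedIC G (FnGraph ⇑f)) :
    Xor' (HasContColoring G 2) (RedIC (FnGraph ⇑f) G) ∧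
    (∀ (L : Type*) [TopologicalSpace L], Is0DMC L →
        ∀ H : Set (L × L), IsGraph H → IsClosed H → ¬ HasContColoring H 2 →
          RedIC H (FnGraph ⇑f) → RedIC (FnGraph ⇑f) H) ∧
    (∀ (L : Type*) [TopologicalSpace L], Is0DMC L →
        ∀ g : L ≃ₜ L, ¬ HasContColoring (FnGraph ⇑g) 2 →
          RedIC (FnGraph ⇑g) (FnGraph ⇑f) → RedIC (FnGraph ⇑f) (FnGraph ⇑g)) := by
  obtain ⟨_, _, hX0⟩ := hX
  have := hK.1
  refine ⟨?_, fun L _ hL H hH hHclosed hHchi hHred => ?_, fun L _ hL g hgchi hgred => ?_⟩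
  · rcases hmin.hasContColoring_or_redIC_of_isClosed hX0 hG hGclosed hred with h | h
    · exact Or.inl ⟨h, fun h' => hchi (h.of_redIC h')⟩
    · exact Or.inr ⟨h, fun h' => hchi (h'.of_redIC h)⟩
  · have := hL.1
    exact (hmin.hasContColoring_or_redIC_of_isClosed hX0 hH hHclosed hHred).resolve_left hHchi
  · obtain ⟨_, _, -⟩ := hL
    exact (hmin.hasContColoring_or_redIC_fnGraph hX0 (hmin.apply_ne_self hchi) g
      hgred).resolve_left hgchi
end
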